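/- Let R be a range set and X a 0-dimensional compact Hausdorff space without isolated points. Then the R-valued ultrametric space (C₀(X,R), ∇), consisting of all continuous maps f: X → (R, M_R) with 0 ∈ f(X) equipped with the supremum ultrametric ∇, is N(R)-injective: for every finite R-valued ultrametric space (A ⊔ {ω}, e) and every isometric embedding φ: A → C₀(X,R), there exists g ∈ C₀(X,R) with ∇(φ(a), g) = e(a,ω) for all a ∈ A. -/
import Mathlib


/-- The nearly discrete ultrametric on `[0,∞)`. -/
noncomputable def MR (x y : ℝ) : ℝ := if x = y then 0 else max x y

/-- The supremum ultrametric on maps into the nearly discrete space. -/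
noncomputable def nabla {X : Type*} (f g : X → ℝ) : ℝ := ⨆ x : X, MR (f x) (g x)

/-- Membership in `C₀(X, R)`: continuity into `(R, M_R)`, values in `R`, and
`0` in the image. -/
structure MemC0 {X : Type*} [TopologicalSpace X] (R : Set ℝ) (f : X → ℝ) : Prop where
  mem : ∀ x, f x ∈ R
  cont : ∀ x : X, ∀ ε > (0 : ℝ), ∃ U : Set X, IsOpen U ∧ x ∈ U ∧
    ∀ y ∈ U, MR (f x) (f y) < ε
  zero_mem : (0 : ℝ) ∈ Set.range f


lemma MR_self (a : ℝ) : MR a a = 0 := if_pos rfl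

lemma MR_comm (a b : ℝ) : MR a b = MR b a := by
  unfold MR
  rcases eq_or_ne a b with h | h
  · simp [h]
  · rw [if_neg h, if_neg (Ne.symm h), max_comm]

lemma MR_nonneg {a b : ℝ} (ha : 0 ≤ a) : 0 ≤ MR a b := by
  unfold MR; split_ifs with h
  · exact le_rfl
  · exact ha.trans (le_max_left a b)

lemma MR_le_max {a b : ℝ} (ha : 0 ≤ a) : MR a b ≤ max a b := by
  unfold MR; split_ifs with h
  · exact le_max_of_le_left ha
  · exact le_rfl

lemma le_MR_left {a b : ℝ} (h : a ≠ b) : a ≤ MR a b := by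
  unfold MR; rw [if_neg h]; exact le_max_left a b

lemma le_MR_right {a b : ℝ} (h : a ≠ b) : b ≤ MR a b := by
  unfold MR; rw [if_neg h]; exact le_max_right a b

lemma MR_zero_pos {b : ℝ} (hb : 0 < b) : MR 0 b = b := by
  unfold MR; rw [if_neg (Ne.symm hb.ne'), max_eq_right hb.le]

lemma eq_of_MR_lt_left {a b : ℝ} (h : MR a b < a) : a = b := by
  by_contra hab
  exact absurd h (not_lt.mpr (le_MR_left hab))

lemma MR_ultra {a b c : ℝ} (ha : 0 ≤ a) (hc : 0 ≤ c) :
    MR a b ≤ max (MR a c) (MR c b) := by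
  by_cases hab : a = b
  · subst hab; rw [MR_self]; exact le_max_of_le_left (MR_nonneg ha)
  by_cases hac : a = c
  · subst hac; exact le_max_right _ _
  by_cases hcb : c = b
  · subst hcb; exact le_max_left _ _
  unfold MR
  rw [if_neg hab, if_neg hac, if_neg hcb]
  exact max_le (le_max_of_le_left (le_max_left a c))
    (le_max_of_le_right (le_max_right c b))

/-- `MemC0` functions are locally constant where positive. -/
lemma memC0_loc_const {X : Type*} [TopologicalSpace X] {R : Set ℝ} {f : X → ℝ}
    (hf : MemC0 R f) {x : X} (hx : 0 < f x) :
    ∃ U : Set X, IsOpen U ∧ x ∈ U ∧ ∀ y ∈ U, f y = f x := by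
  obtain ⟨U, hUo, hxU, hU⟩ := hf.cont x (f x) hx
  exact ⟨U, hUo, hxU, fun y hy => (eq_of_MR_lt_left (hU y hy)).symm⟩

/-- `MemC0` functions are locally small at zeros. -/
lemma memC0_loc_small {X : Type*} [TopologicalSpace X] {R : Set ℝ} {f : X → ℝ}
    (hf : MemC0 R f) {x : X} (hx : f x = 0) {ε : ℝ} (hε : 0 < ε) :
    ∃ U : Set X, IsOpen U ∧ x ∈ U ∧ ∀ y ∈ U, f y < ε := by
  obtain ⟨U, hUo, hxU, hU⟩ := hf.cont x ε hε
  refine ⟨U, hUo, hxU, fun y hy => ?_⟩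
  have := hU y hy
  rw [hx] at this
  rcases eq_or_ne (0 : ℝ) (f y) with h | h
  · rw [← h]; exact hε
  · exact lt_of_le_of_lt (le_MR_right h) this

/-- `MemC0` functions on a compact space are bounded above. -/
lemma memC0_bdd {X : Type*} [TopologicalSpace X] [CompactSpace X] {R : Set ℝ}
    {f : X → ℝ} (hf : MemC0 R f) : ∃ B : ℝ, ∀ x, f x ≤ B := by
  have key : ∀ x : X, ∃ U ∈ nhds x, ∀ y ∈ U, f y ≤ max (f x) 1 := by
    intro x
    obtain ⟨U, hUo, hxU, hU⟩ := hf.cont x 1 one_pos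
    refine ⟨U, hUo.mem_nhds hxU, fun y hy => ?_⟩
    rcases eq_or_ne (f x) (f y) with h | h
    · rw [← h]; exact le_max_left _ _
    · exact le_max_of_le_right ((le_MR_right h).trans (hU y hy).le)
  choose U hU hU2 using key
  obtain ⟨t, -, ht⟩ := isCompact_univ.elim_nhds_subcover U (fun x _ => hU x)
  refine ⟨∑ x ∈ t, max (f x) 1, fun x => ?_⟩
  obtain ⟨i, hi, hxi⟩ := Set.mem_iUnion₂.mp (ht (Set.mem_univ x))
  calc f x ≤ max (f i) 1 := hU2 i x hxi
    _ ≤ ∑ x ∈ t, max (f x) 1 :=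
      Finset.single_le_sum (f := fun x => max (f x) 1) (fun j _ => le_max_of_le_right zero_le_one) hi

/-- `e` is an `R`-valued ultrametric on the type `A`. -/
structure IsRUltrametricOn {A : Type*} (R : Set ℝ) (e : A → A → ℝ) : Prop where
  mem : ∀ x y, e x y ∈ R
  nonneg : ∀ x y, 0 ≤ e x y
  refl : ∀ x, e x x = 0
  eq_of : ∀ x y, e x y = 0 → x = y
  symm : ∀ x y, e x y = e y x
  ultra : ∀ x y z, e x y ≤ max (e x z) (e z y)

/-- If `X` is a `0`-dimensional compact Hausdorff space without isolated
points, then `(C₀(X,R), ∇)` is `N(R)`-injective. -/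
theorem stmt_19 {X : Type*} [TopologicalSpace X] [CompactSpace X] [T2Space X]
    (hdim : TopologicalSpace.IsTopologicalBasis {s : Set X | IsClopen s})
    (hiso : ∀ x : X, ¬ IsOpen ({x} : Set X))
    (R : Set ℝ) (hR : R ⊆ Set.Ici (0 : ℝ)) (h0 : (0 : ℝ) ∈ R)
    (n : ℕ) (e : (Fin (n + 1) ⊕ Unit) → (Fin (n + 1) ⊕ Unit) → ℝ)
    (he : IsRUltrametricOn R e)
    (φ : Fin (n + 1) → X → ℝ)
    (hφmem : ∀ i, MemC0 R (φ i))
    (hφiso : ∀ i j, nabla (φ i) (φ j) = e (Sum.inl i) (Sum.inl j)) :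
    ∃ g : X → ℝ, MemC0 R g ∧
      ∀ i, nabla (φ i) g = e (Sum.inl i) (Sum.inr ()) := by
  classical
  have hφ0 : ∀ i x, 0 ≤ φ i x := fun i x => hR ((hφmem i).mem x)
  choose y hy using fun i => Set.mem_range.mp (hφmem i).zero_mem
  haveI : Nonempty X := ⟨y 0⟩
  choose B hB using fun i => memC0_bdd (hφmem i)
  have hBdd : ∀ i j, BddAbove (Set.range fun x => MR (φ i x) (φ j x)) := by
    intro i j
    refine ⟨max (B i) (B j), ?_⟩
    rintro _ ⟨x, rfl⟩
    exact (MR_le_max (hφ0 i x)).trans (max_le_max (hB i x) (hB j x))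
  have hpt : ∀ i j x, MR (φ i x) (φ j x) ≤ e (Sum.inl i) (Sum.inl j) := fun i j x =>
    (le_ciSup (hBdd i j) x).trans_eq (hφiso i j)
  obtain ⟨i₀, hi₀⟩ := Finite.exists_min (fun i : Fin (n + 1) => e (Sum.inl i) (Sum.inr ()))
  set r := e (Sum.inl i₀) (Sum.inr ()) with hrdef
  have hr0 : 0 < r := by
    rcases (he.nonneg (Sum.inl i₀) (Sum.inr ())).lt_or_eq with h | h
    · exact h
    · exact absurd (he.eq_of _ _ h.symm) (by simp)
  set V := {x : X | r < φ i₀ x} with hVdef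
  have hVopen : IsOpen V := by
    rw [isOpen_iff_forall_mem_open]
    intro x hx
    obtain ⟨U, hUo, hxU, hU⟩ := memC0_loc_const (hφmem i₀) (hr0.trans hx)
    exact ⟨U, fun z hz => by simpa [hVdef, hU z hz] using hx, hUo, hxU⟩
  have hVcopen : IsOpen {x : X | φ i₀ x ≤ r} := by
    rw [isOpen_iff_forall_mem_open]
    intro x hx
    rcases (hφ0 i₀ x).lt_or_eq with hp | hp
    · obtain ⟨U, hUo, hxU, hU⟩ := memC0_loc_const (hφmem i₀) hp
      exact ⟨U, fun z hz => by simpa [hU z hz] using hx, hUo, hxU⟩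
    · obtain ⟨U, hUo, hxU, hU⟩ := memC0_loc_small (hφmem i₀) hp.symm hr0
      exact ⟨U, fun z hz => (hU z hz).le, hUo, hxU⟩
  have hVcomp : Vᶜ = {x : X | φ i₀ x ≤ r} := by
    ext x; simp [hVdef, not_lt]
  have hVco : IsOpen (Vᶜ) := by rw [hVcomp]; exact hVcopen
  -- y i avoids V when e (inl i) (inl i₀) ≤ r
  have hyV : ∀ i, e (Sum.inl i) (Sum.inl i₀) ≤ r → y i ∉ V := by
    intro i hle hyi
    have h1 : MR (φ i (y i)) (φ i₀ (y i)) ≤ r := (hpt i i₀ (y i)).trans hle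
    rw [hy i] at h1
    have h2 : r < φ i₀ (y i) := hyi
    rw [MR_zero_pos (hr0.trans h2)] at h1
    exact absurd h2 (not_lt.mpr h1)
  -- pick z
  haveI : Filter.NeBot (nhdsWithin (y i₀) {y i₀}ᶜ) := by
    rw [Filter.neBot_iff]
    intro hbot
    exact hiso (y i₀) ((isOpen_singleton_iff_punctured_nhds (y i₀)).mpr hbot)
  have hyi₀V : y i₀ ∈ Vᶜ := by
    rw [hVcomp]; simp only [Set.mem_setOf_eq, hy i₀]; exact hr0.le
  have hVcinf : (Vᶜ : Set X).Infinite :=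
    infinite_of_mem_nhds (y i₀) (hVco.mem_nhds hyi₀V)
  obtain ⟨z, hzVc, hzy⟩ := (hVcinf.diff (Set.finite_range y)).nonempty
  -- clopen neighborhoods
  have hDex : ∀ i, ∃ D : Set X, IsClopen D ∧ D ⊆ Vᶜ ∧ z ∉ D ∧ (y i ∉ V → y i ∈ D) := by
    intro i
    by_cases h : y i ∈ V
    · exact ⟨∅, isClopen_empty, Set.empty_subset _, Set.notMem_empty _,
        fun h' => absurd h h'⟩
    · have hyz : y i ≠ z := fun hh => hzy ⟨i, hh⟩
      have hopen : IsOpen (Vᶜ ∩ {z}ᶜ) :=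
        hVco.inter isClosed_singleton.isOpen_compl
      have hmem : y i ∈ Vᶜ ∩ {z}ᶜ := ⟨h, by simpa using hyz⟩
      obtain ⟨D, hD, hyD, hDsub⟩ := hdim.exists_subset_of_mem_open hmem hopen
      exact ⟨D, hD, hDsub.trans (Set.inter_subset_left),
        fun hzD => (hDsub hzD).2 rfl, fun _ => hyD⟩
  choose D hD1 hD2 hD3 hD4 using hDex
  set W := ⋃ i, D i with hWdef
  have hWclopen : IsClopen W :=
    ⟨isClosed_iUnion_of_finite (fun i => (hD1 i).1), isOpen_iUnion fun i => (hD1 i).2⟩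
  have hWV : W ⊆ Vᶜ := Set.iUnion_subset hD2
  have hzW : z ∉ W := fun h => by
    obtain ⟨i, hi⟩ := Set.mem_iUnion.mp h
    exact hD3 i hi
  set g : X → ℝ := fun x => if x ∈ W then r else if r < φ i₀ x then φ i₀ x else 0
    with hgdef
  have hgW : ∀ x ∈ W, g x = r := fun x hx => if_pos hx
  have hgV : ∀ x ∈ V, g x = φ i₀ x := fun x hx => by
    rw [hgdef]
    simp only
    rw [if_neg (fun h => hWV h hx), if_pos (show r < φ i₀ x from hx)]
  have hgZ : ∀ x, x ∉ W → x ∉ V → g x = 0 := fun x h1 h2 => by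
    rw [hgdef]; simp only; rw [if_neg h1, if_neg (show ¬ r < φ i₀ x from h2)]
  have hg0 : ∀ x, 0 ≤ g x := by
    intro x
    by_cases h1 : x ∈ W
    · rw [hgW x h1]; exact hr0.le
    by_cases h2 : x ∈ V
    · rw [hgV x h2]; exact hφ0 i₀ x
    · rw [hgZ x h1 h2]
  have hgB : ∀ x, g x ≤ max r (B i₀) := by
    intro x
    by_cases h1 : x ∈ W
    · rw [hgW x h1]; exact le_max_left _ _
    by_cases h2 : x ∈ V
    · rw [hgV x h2]; exact le_max_of_le_right (hB i₀ x)
    · rw [hgZ x h1 h2]; exact le_max_of_le_left hr0.le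
  -- key pointwise bound for φ i₀
  have hgpt : ∀ x, MR (φ i₀ x) (g x) ≤ r := by
    intro x
    by_cases h1 : x ∈ W
    · have hxle : φ i₀ x ≤ r := not_lt.mp (hWV h1)
      rw [hgW x h1]
      exact (MR_le_max (hφ0 i₀ x)).trans (max_le hxle le_rfl)
    by_cases h2 : x ∈ V
    · rw [hgV x h2, MR_self]; exact hr0.le
    · have hxle : φ i₀ x ≤ r := not_lt.mp h2
      rw [hgZ x h1 h2]
      exact (MR_le_max (hφ0 i₀ x)).trans (max_le hxle hr0.le)
  have hgBdd : ∀ i, BddAbove (Set.range fun x => MR (φ i x) (g x)) := by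
    intro i
    refine ⟨max (B i) (max r (B i₀)), ?_⟩
    rintro _ ⟨x, rfl⟩
    exact (MR_le_max (hφ0 i x)).trans (max_le_max (hB i x) (hgB x))
  refine ⟨g, ⟨?_, ?_, ?_⟩, ?_⟩
  · -- values in R
    intro x
    by_cases h1 : x ∈ W
    · rw [hgW x h1]; exact he.mem _ _
    by_cases h2 : x ∈ V
    · rw [hgV x h2]; exact (hφmem i₀).mem x
    · rw [hgZ x h1 h2]; exact h0
  · -- continuity: g is locally constant
    intro x ε hε
    by_cases h1 : x ∈ W
    · exact ⟨W, hWclopen.2, h1, fun w hw => by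
        rw [hgW x h1, hgW w hw, MR_self]; exact hε⟩
    by_cases h2 : x ∈ V
    · obtain ⟨U, hUo, hxU, hU⟩ := memC0_loc_const (hφmem i₀) (hr0.trans h2)
      refine ⟨U, hUo, hxU, fun w hw => ?_⟩
      have hwV : w ∈ V := by
        show r < φ i₀ w
        rw [hU w hw]; exact h2
      rw [hgV x h2, hgV w hwV, hU w hw, MR_self]; exact hε
    · have hx2 : φ i₀ x ≤ r := not_lt.mp h2
      refine ⟨{x : X | φ i₀ x ≤ r} ∩ Wᶜ, hVcopen.inter hWclopen.1.isOpen_compl,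
        ⟨hx2, h1⟩, fun w hw => ?_⟩
      have hwV : w ∉ V := fun hc => absurd (show r < φ i₀ w from hc) (not_lt.mpr (show φ i₀ w ≤ r from hw.1))
      rw [hgZ x h1 h2, hgZ w hw.2 hwV, MR_self]; exact hε
  · -- zero in range
    exact ⟨z, hgZ z hzW hzVc⟩
  · -- the distances
    intro i
    by_cases hcase : e (Sum.inl i) (Sum.inl i₀) ≤ r
    · -- case r_i = r
      have hri : e (Sum.inl i) (Sum.inr ()) = r :=
        le_antisymm ((he.ultra _ _ (Sum.inl i₀)).trans (max_le hcase le_rfl)) (hi₀ i)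
      rw [hri]
      refine le_antisymm (Real.iSup_le (fun x => ?_) hr0.le) ?_
      · exact (MR_ultra (hφ0 i x) (hφ0 i₀ x)).trans
          (max_le ((hpt i i₀ x).trans hcase) (hgpt x))
      · have hyiW : y i ∈ W := Set.mem_iUnion.mpr ⟨i, hD4 i (hyV i hcase)⟩
        have hval : MR (φ i (y i)) (g (y i)) = r := by
          rw [hy i, hgW _ hyiW, MR_zero_pos hr0]
        exact hval ▸ le_ciSup (hgBdd i) (y i)
    · -- case r_i = e(i, i₀) > r
      have hgt : r < e (Sum.inl i) (Sum.inl i₀) := not_le.mp hcase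
      have h1 : e (Sum.inl i) (Sum.inl i₀) ≤ e (Sum.inl i) (Sum.inr ()) := by
        have h := he.ultra (Sum.inl i) (Sum.inl i₀) (Sum.inr ())
        rw [he.symm (Sum.inr ()) (Sum.inl i₀)] at h
        exact (le_max_iff.mp h).resolve_right (not_le.mpr hgt)
      have h2 : e (Sum.inl i) (Sum.inr ()) ≤ e (Sum.inl i) (Sum.inl i₀) :=
        (he.ultra _ _ (Sum.inl i₀)).trans (max_le le_rfl hgt.le)
      rw [le_antisymm h2 h1]
      refine le_antisymm (Real.iSup_le (fun x => ?_) (he.nonneg _ _)) ?_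
      · exact (MR_ultra (hφ0 i x) (hφ0 i₀ x)).trans
          (max_le (hpt i i₀ x) ((hgpt x).trans hgt.le))
      · have hsup : e (Sum.inl i) (Sum.inl i₀) ≤ max (nabla (φ i) g) r := by
          rw [← hφiso i i₀]
          refine Real.iSup_le (fun x => ?_) (le_max_of_le_right hr0.le)
          refine (MR_ultra (hφ0 i x) (hg0 x)).trans
            (max_le_max (le_ciSup (hgBdd i) x) ?_)
          rw [MR_comm]; exact hgpt x
        exact (le_max_iff.mp hsup).resolve_right (not_le.mpr hgt)
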